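/- arXiv:2510.23518 — 2 statements merged into one kernel-verified Lean document; each statement's English description precedes it below -/
import Mathlib

section
/- Let S be a ring, P a projective S-module, and M ≤ P an S-submodule. Suppose S embeds into an Artinian ring D such that the image of the induced map D ⊗_S M → D ⊗_S P has finite length as a D-module. Then M is contained in a finitely generated S-submodule of P. -/
/-!
A splitting `s : P → (P →₀ S)` of the canonical surjection gives, after base change, `D`-linear
coordinates `D ⊗[S] P → (P →₀ D)` sending `1 ⊗ x` to the image of `s x`. The image of
`D ⊗[S] M` has finite length, hence is finitely generated, so its coordinates are all supported
on one finite set `J ⊆ P`. As `S → D` is injective, `s m` is supported on `J` for every `m ∈ M`,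
and therefore `m = ∑ₚ (s m)ₚ • p` lies in the span of `J`.
-/

open TensorProduct

theorem Submodule.FG.exists_le_supported {R M X : Type*} [Semiring R] [AddCommMonoid M]
    [Module R M] {Q : Submodule R (X →₀ M)} (hQ : Q.FG) :
    ∃ J : Finset X, Q ≤ Finsupp.supported M R ↑J := by
  classical
  obtain ⟨T, rfl⟩ := hQ
  refine ⟨T.biUnion (·.support), Submodule.span_le.2 fun t ht => (Finsupp.mem_supported _ _).2 ?_⟩
  exact_mod_cast Finset.subset_biUnion_of_mem _ ht

theorem Finsupp.mapRange_mem_supported_iff {R S M N X : Type*} [Semiring R] [Semiring S]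
    [AddCommMonoid M] [Module R M] [AddCommMonoid N] [Module S N] {e : M → N} (he0 : e 0 = 0)
    (he : Function.Injective e) (f : X →₀ M) (s : Set X) :
    f.mapRange e he0 ∈ supported N S s ↔ f ∈ supported M R s := by
  classical
  simp only [mem_supported, support_mapRange_of_injective he0 f he]

theorem TensorProduct.finsuppScalarRight_baseChange_one_tmul {S A P : Type*} [CommSemiring S]
    [Semiring A] [Algebra S A] [AddCommMonoid P] [Module S P] [DecidableEq P]
    (s : P →ₗ[S] P →₀ S) (x : P) :
    finsuppScalarRight S A A P (s.baseChange A (1 ⊗ₜ x)) =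
      (s x).mapRange (algebraMap S A) (map_zero _) := by
  ext p
  simp [Algebra.algebraMap_eq_smul_one]

theorem Module.Projective.exists_fg_le_of_fg_range_baseChange {S A P : Type*} [CommSemiring S]
    [Semiring A] [Algebra S A] (hinj : Function.Injective (algebraMap S A))
    [AddCommMonoid P] [Module S P] [Module.Projective S P] (M : Submodule S P)
    (hM : (LinearMap.range (M.subtype.baseChange A)).FG) :
    ∃ N : Submodule S P, N.FG ∧ M ≤ N := by
  classical
  obtain ⟨s, hs⟩ := Module.projective_def.mp ‹Module.Projective S P›
  let coords := (finsuppScalarRight S A A P).toLinearMap ∘ₗ s.baseChange A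
  obtain ⟨J, hJ⟩ := (hM.map coords).exists_le_supported
  refine ⟨Submodule.span S J, Submodule.fg_span J.finite_toSet, fun m hm => ?_⟩
  have h1m : coords (1 ⊗ₜ m) ∈ Finsupp.supported A A ↑J :=
    hJ ⟨1 ⊗ₜ m, ⟨1 ⊗ₜ ⟨m, hm⟩, rfl⟩, rfl⟩
  have hsm : s m ∈ Finsupp.supported S S ↑J := by
    rwa [LinearMap.comp_apply, LinearEquiv.coe_coe, finsuppScalarRight_baseChange_one_tmul,
      Finsupp.mapRange_mem_supported_iff (R := S) _ hinj] at h1m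
  rw [← hs m, ← Set.image_id (J : Set P), Finsupp.span_image_eq_map_linearCombination]
  exact Submodule.mem_map_of_mem hsm

theorem stmt0_general (S : Type*) [CommRing S] (D : Type*) [Ring D] [Algebra S D]
    (hinj : Function.Injective (algebraMap S D))
    (P : Type*) [AddCommGroup P] [Module S P] [Module.Projective S P]
    (M : Submodule S P)
    (hlen : IsFiniteLength D (LinearMap.range (LinearMap.baseChange D M.subtype))) :
    ∃ N : Submodule S P, N.FG ∧ M ≤ N := by
  have := (isFiniteLength_iff_isNoetherian_isArtinian.mp hlen).1
  exact Module.Projective.exists_fg_le_of_fg_range_baseChange hinj M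
    (Module.Finite.iff_fg.mp inferInstance)

theorem stmt0 (S : Type*) [CommRing S] (D : Type*) [Ring D] [Algebra S D]
    [IsArtinianRing D] (hinj : Function.Injective (algebraMap S D))
    (P : Type*) [AddCommGroup P] [Module S P] [Module.Projective S P]
    (M : Submodule S P)
    (hlen : IsFiniteLength D (LinearMap.range (LinearMap.baseChange D M.subtype))) :
    ∃ N : Submodule S P, N.FG ∧ M ≤ N :=
  stmt0_general S D hinj P M hlen
end

section
/- Let (G, X) be a group pair with cd_K(G, X) ≤ 2 over a field K, with T a complete set of representatives of non-regular orbits. Let t₁, t₂ ∈ T and g ∈ G, and suppose either t₁ ≠ t₂ or g ∉ G_{t₂}. Then the subgroup H = G_{t₁} ∩ g⁻¹G_{t₂}g satisfies cd_K(H) ≤ 1, i.e., Ext²_{K[H]}(K, L) = 0 for every K[H]-module L. -/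
set_option synthInstance.maxHeartbeats 1000000

open MonoidAlgebra

namespace GPaper

variable (R : Type*) [CommRing R] (G : Type*) [Group G]

/-- The permutation representation on `X →₀ R` (Mathlib's old `Representation.ofMulAction`). -/
noncomputable def permRep (X : Type*) [MulAction G X] : Representation R G (X →₀ R) where
  toFun g := Finsupp.lmapDomain R R (g • ·)
  map_one' := by ext x y; simp
  map_mul' x y := by ext z w; simp [mul_smul, ← Finsupp.mapDomain_comp, Function.comp_def]

/-- The permutation module `R[X]` of a `G`-set `X`, as a module over `MonoidAlgebra R G`. -/
noncomputable abbrev permMod (X : Type*) [MulAction G X] :=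
  (permRep R G X).asModule

/-- The trivial module `R` over `MonoidAlgebra R G`. -/
noncomputable abbrev trivMod := (Representation.trivial R (G := G) (V := R)).asModule


noncomputable instance permModAddCommGroup (X : Type*) [MulAction G X] :
    AddCommGroup (permMod R G X) :=
  inferInstanceAs (AddCommGroup (X →₀ R))

noncomputable instance trivModAddCommGroup : AddCommGroup (trivMod R G) :=
  inferInstanceAs (AddCommGroup R)

/-- A `G`-equivariant `R`-linear map between representations induces a
`MonoidAlgebra R G`-linear map between the associated modules. -/
noncomputable def eqvLinear {V W : Type*} [AddCommMonoid V] [Module R V]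
    [AddCommMonoid W] [Module R W]
    (ρ : Representation R G V) (σ : Representation R G W) (f : V →ₗ[R] W)
    (hf : ∀ g v, f (ρ g v) = σ g (f v)) :
    ρ.asModule →ₗ[MonoidAlgebra R G] σ.asModule where
  toFun := f
  map_add' := f.map_add
  map_smul' := by
    intro r m
    have key : ∀ (r : MonoidAlgebra R G) (v : V),
        f (ρ.asAlgebraHom r v) = σ.asAlgebraHom r (f v) := by
      intro r
      induction r using MonoidAlgebra.induction_linear with
      | zero => intro v; simp
      | add a b ha hb => intro v; simp [map_add, ha v, hb v]
      | single g c =>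
        intro v
        simp only [Representation.asAlgebraHom_single, LinearMap.smul_apply, map_smul]
        exact congrArg _ (hf g v)
    have h1 : (r • m : ρ.asModule) = (ρ.asAlgebraHom r) m := ρ.asModuleEquiv_map_smul r m
    have h2 : ∀ y : σ.asModule, (r • y : σ.asModule) = (σ.asAlgebraHom r) y :=
      fun y => σ.asModuleEquiv_map_smul r y
    simp only [RingHom.id_apply]
    rw [h1, h2 (f m)]
    exact key r m

/-- The augmentation map `R[X] → R` as a map of `MonoidAlgebra R G`-modules. -/
noncomputable def augLin (X : Type*) [MulAction G X] :
    permMod R G X →ₗ[MonoidAlgebra R G] trivMod R G :=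
  eqvLinear R G _ _ (Finsupp.linearCombination R fun _ : X => (1 : R)) (by
    intro g v
    show Finsupp.linearCombination R (fun _ : X => (1:R))
        (Finsupp.mapDomain (g • ·) v) = _
    rw [Finsupp.linearCombination_mapDomain]
    rfl)

/-- The augmentation module `ω_R(X)` of the group pair `(G, X)`. -/
noncomputable def omegaMod (X : Type*) [MulAction G X] :
    Submodule (MonoidAlgebra R G) (permMod R G X) :=
  LinearMap.ker (augLin R G X)

/-- A `G`-map of `G`-sets induces a `MonoidAlgebra R G`-linear map of permutation
modules. -/
noncomputable def permMap {X Y : Type*} [MulAction G X] [MulAction G Y] (f : X → Y)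
    (hf : ∀ (g : G) (x : X), f (g • x) = g • f x) :
    permMod R G X →ₗ[MonoidAlgebra R G] permMod R G Y :=
  eqvLinear R G _ _ (Finsupp.lmapDomain R R f) (by
    intro g v
    show Finsupp.mapDomain f (Finsupp.mapDomain (g • ·) v)
        = Finsupp.mapDomain (g • ·) (Finsupp.mapDomain f v)
    rw [← Finsupp.mapDomain_comp, ← Finsupp.mapDomain_comp]
    congr 1
    funext x
    exact hf g x)

end GPaper

/-!
STATEMENT 16: Let `(G, X)` be a group pair with `cd_K(G, X) ≤ 2` over a field
`K` (i.e. `ω_K(X)` has projective dimension at most 1 over `K[G]`), with `T` a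
complete set of representatives of non-regular orbits.  Let `t₁, t₂ ∈ T` and
`g ∈ G` with `t₁ ≠ t₂` (representatives of distinct orbits) or `g ∉ G_{t₂}`.
Then `H = G_{t₁} ∩ g⁻¹ G_{t₂} g` satisfies `cd_K(H) ≤ 1`, i.e. the trivial
`K[H]`-module `K` has projective dimension at most 1.
-/

universe u

/-- The projective dimension of the `S`-module `M` is at most `n`. -/
def ProjDimLE (S : Type u) [Ring S] :
    ℕ → ∀ (M : Type u) [AddCommGroup M] [Module S M], Prop
  | 0, M, _, _ => Module.Projective S M
  | (n+1), M, _, _ => ∃ (ι : Type u) (p : Submodule S (ι →₀ S)),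
      Module.Projective S ↥p ∧ ∃ f : ↥p →ₗ[S] M, Function.Surjective f ∧
        ProjDimLE S n ↥((LinearMap.ker f).map p.subtype)


/-!
Restricting a length-one projective resolution of `ω_K(X)` from `K[G]` to `K[H]` keeps it
projective, because `K[G]` is a free `K[H]`-module on the right cosets of `H`. Both `t₁` and
`g⁻¹ t₂` are fixed by `H`, and the hypothesis on `t₁, t₂, g` says exactly that they are
distinct, so `c ↦ c (t₁ - g⁻¹ t₂)` embeds the trivial module `K` into `ω_K(X)` as a direct
summand, split by evaluation at `t₁`. A direct summand of a module of projective dimension at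
most one again has projective dimension at most one.
-/

open LinearMap

namespace Module.Projective

section Semiring

variable {R : Type*} [Semiring R] {A N P : Type*} [AddCommGroup A] [Module R A]
  [AddCommGroup N] [Module R N] [AddCommGroup P] [Module R P]

theorem of_exact [Module.Projective R A] [Module.Projective R P] {f : A →ₗ[R] N}
    {g : N →ₗ[R] P} (h : Function.Exact f g) (hf : Function.Injective f)
    (hg : Function.Surjective g) : Module.Projective R N := by
  obtain ⟨l, hl⟩ := g.exists_rightInverse_of_surjective (range_eq_top.2 hg)
  exact .of_equiv (h.splitSurjectiveEquiv hf ⟨l, hl⟩).1.symm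

end Semiring

variable {R : Type*} [Ring R] {A M P : Type*} [AddCommGroup A] [Module R A]
  [AddCommGroup M] [Module R M] [AddCommGroup P] [Module R P]

/-- With `N = f⁻¹(ker φ)` and `N' = f⁻¹(σ A)`, the sum map `N × N' → P` is onto with kernel
`ker f`, so `N × N'` is projective and `N` is a summand of it. -/
theorem ker_comp_of_leftInverse [Module.Projective R P] (f : P →ₗ[R] M)
    (hf : Function.Surjective f) (hker : Module.Projective R (ker f)) (φ : M →ₗ[R] A)
    (σ : A →ₗ[R] M) (hφσ : Function.LeftInverse φ σ) : Module.Projective R (ker (φ ∘ₗ f)) := by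
  set N := ker (φ ∘ₗ f)
  set N' := ker ((LinearMap.id - σ ∘ₗ φ) ∘ₗ f)
  have mem_N' {p : P} : p ∈ N' ↔ f p = σ (φ (f p)) := by simp [N', sub_eq_zero]
  let ι : ker f →ₗ[R] N × N' :=
    ((ker f).subtype.codRestrict N fun p => by simp [N, mem_ker.1 p.2]).prod
      ((-(ker f).subtype).codRestrict N' fun p => by simp [mem_N', mem_ker.1 p.2])
  let π : N × N' →ₗ[R] P := N.subtype.coprod N'.subtype
  have hι : Function.Injective ι := fun p q h => Subtype.ext (congrArg (·.1.1) h)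
  have hπ : Function.Surjective π := by
    intro p
    obtain ⟨p', hp'⟩ := hf (σ (φ (f p)))
    refine ⟨(⟨p - p', ?_⟩, ⟨p', ?_⟩), by simp [π]⟩
    · simp [N, hp', hφσ _]
    · simp [mem_N', hp', hφσ _]
  have hexact : Function.Exact ι π := by
    intro x
    constructor
    · obtain ⟨⟨n, hn⟩, ⟨n', hn'⟩⟩ := x
      intro h
      obtain rfl : n' = -n := eq_neg_of_add_eq_zero_right h
      have hφfn : φ (f n) = 0 := hn
      have hfn : f n = 0 := by simpa [hφfn] using mem_N'.1 hn'
      exact ⟨⟨n, hfn⟩, rfl⟩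
    · rintro ⟨p, rfl⟩
      exact add_neg_cancel (p : P)
  have := of_exact hexact hι hπ
  exact .of_split (inl R N N') (fst R N N') (fst_comp_inl R N N')

end Module.Projective

universe v

/-- Unlike in `ProjDimLE`, the projective module mapping onto `M` is arbitrary, not a submodule
of a free module. -/
def ProjDimLEOne (R : Type*) [Ring R] (M : Type v) [AddCommGroup M] [Module R M] : Prop :=
  ∃ (P : Type v) (_ : AddCommGroup P) (_ : Module R P) (f : P →ₗ[R] M),
    Function.Surjective f ∧ Module.Projective R P ∧ Module.Projective R (ker f)

theorem projDimLE_one_iff {S M : Type u} [Ring S] [AddCommGroup M] [Module S M] :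
    ProjDimLE S 1 M ↔ ProjDimLEOne S M := by
  constructor
  · rintro ⟨ι, p, hp, f, hf, hker⟩
    have hker : Module.Projective S ((ker f).map p.subtype) := hker
    have : Module.Projective S (ker f) :=
      .of_equiv (Submodule.equivMapOfInjective _ p.injective_subtype (ker f)).symm
    exact ⟨p, inferInstance, inferInstance, f, hf, hp, this⟩
  · rintro ⟨P, _, _, f, hf, hP, hker⟩
    obtain ⟨s, hs⟩ := Module.projective_def.1 hP
    let e : P ≃ₗ[S] range s := LinearEquiv.ofInjective s hs.injective
    refine ⟨P, range s, .of_equiv e, f ∘ₗ e.symm.toLinearMap, hf.comp e.symm.surjective, ?_⟩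
    have hker_comp : ker (f ∘ₗ e.symm.toLinearMap) = (ker f).map (e : P →ₗ[S] range s) := by
      rw [ker_comp, Submodule.comap_equiv_eq_map_symm, e.symm_symm]
    have : Module.Projective S ((ker f).map (e : P →ₗ[S] range s)) :=
      .of_equiv (e.submoduleMap (ker f))
    show Module.Projective S ((ker (f ∘ₗ e.symm.toLinearMap)).map (range s).subtype)
    rw [hker_comp]
    exact .of_equiv (Submodule.equivMapOfInjective _ (range s).injective_subtype _)

namespace ProjDimLEOne

variable {R : Type*} [Ring R] {M N : Type v} [AddCommGroup M] [Module R M]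
  [AddCommGroup N] [Module R N]

theorem of_linearEquiv (h : ProjDimLEOne R M) (e : M ≃ₗ[R] N) : ProjDimLEOne R N := by
  obtain ⟨P, _, _, f, hf, hP, hker⟩ := h
  exact ⟨P, _, _, e.toLinearMap ∘ₗ f, e.surjective.comp hf, hP, by rwa [LinearEquiv.ker_comp]⟩

theorem of_leftInverse (h : ProjDimLEOne R M) (φ : M →ₗ[R] N) (σ : N →ₗ[R] M)
    (hφσ : Function.LeftInverse φ σ) : ProjDimLEOne R N := by
  obtain ⟨P, _, _, f, hf, hP, hker⟩ := h
  exact ⟨P, _, _, φ ∘ₗ f, hφσ.surjective.comp hf, hP,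
    Module.Projective.ker_comp_of_leftInverse f hf hker φ σ hφσ⟩

end ProjDimLEOne

/-- Restriction of scalars along `j`. (Mathlib's `RestrictScalars` needs an algebra over a
commutative ring, which a group algebra `k[H]` is not.) -/
def Res {R S : Type*} [Semiring R] [Semiring S] (_ : R →+* S) (M : Type*) := M

namespace Res

variable {R S : Type*} [Semiring R] [Semiring S] (j : R →+* S)

instance {M : Type*} [AddCommMonoid M] : AddCommMonoid (Res j M) :=
  inferInstanceAs (AddCommMonoid M)

instance {M : Type*} [AddCommGroup M] : AddCommGroup (Res j M) :=
  inferInstanceAs (AddCommGroup M)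

instance {M : Type*} [AddCommMonoid M] [Module S M] : Module R (Res j M) :=
  Module.compHom M j

def addEquiv (M : Type*) [AddCommMonoid M] : Res j M ≃+ M := AddEquiv.refl M

variable {M N : Type*} [AddCommMonoid M] [Module S M] [AddCommMonoid N] [Module S N]

theorem addEquiv_smul (r : R) (x : Res j M) : addEquiv j M (r • x) = j r • addEquiv j M x :=
  rfl

def map (f : M →ₗ[S] N) : Res j M →ₗ[R] Res j N where
  toFun := f
  map_add' := f.map_add
  map_smul' r := f.map_smul (j r)

def kerEquiv (f : M →ₗ[S] N) : Res j (ker f) ≃ₗ[R] ker (map j f) where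
  toFun x := ⟨(x : ker f).1, (x : ker f).2⟩
  invFun x := (⟨x.1, x.2⟩ : ker f)
  map_add' _ _ := rfl
  map_smul' _ _ := rfl
  left_inv _ := rfl
  right_inv _ := rfl

def finsuppEquiv : Res j (M →₀ S) ≃ₗ[R] (M →₀ Res j S) where
  toFun v := v
  invFun v := v
  map_add' _ _ := rfl
  map_smul' _ _ := by ext; rfl
  left_inv _ := rfl
  right_inv _ := rfl

theorem projective [Module.Free R (Res j S)] [Module.Projective S M] :
    Module.Projective R (Res j M) := by
  obtain ⟨s, hs⟩ := Module.projective_def.1 ‹Module.Projective S M›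
  exact .of_split ((finsuppEquiv j).toLinearMap ∘ₗ map j s)
    (map j (Finsupp.linearCombination S id) ∘ₗ (finsuppEquiv j).symm.toLinearMap)
    (LinearMap.ext hs)

end Res

theorem ProjDimLEOne.restrict {R S : Type*} [Ring R] [Ring S] (j : R →+* S)
    [Module.Free R (Res j S)] {M : Type v} [AddCommGroup M] [Module S M]
    (h : ProjDimLEOne S M) : ProjDimLEOne R (Res j M) := by
  obtain ⟨P, _, _, f, hf, hP, hker⟩ := h
  have : Module.Projective R (Res j (ker f)) := Res.projective j
  exact ⟨Res j P, inferInstance, inferInstance, Res.map j f, hf, Res.projective j,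
    .of_equiv (Res.kerEquiv j f)⟩

section RightCosets

open QuotientGroup

variable {G : Type*} [Group G] (H : Subgroup G)

noncomputable def Subgroup.rightCosetProdEquiv : Quotient (rightRel H) × H ≃ G where
  toFun x := x.2 * x.1.out
  invFun g := (Quotient.mk _ g, ⟨g * (Quotient.mk (rightRel H) g).out⁻¹,
    rightRel_apply.1 (Quotient.mk_out (s := rightRel H) g)⟩)
  left_inv := by
    rintro ⟨q, h⟩
    have hq : Quotient.mk (rightRel H) (h * q.out) = q := by
      conv_rhs => rw [← q.out_eq]
      exact Quotient.sound (rightRel_apply.2 (by simp))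
    ext <;> simp [hq]
  right_inv g := by simp

namespace MonoidAlgebra

variable (k : Type*) [Semiring k]

noncomputable def rightCosetAddEquiv : (Quotient (rightRel H) →₀ k[H]) ≃+ k[G] :=
  (Finsupp.mapRange.addEquiv coeffAddEquiv).trans <|
    Finsupp.curryAddEquiv.symm.trans <|
      (Finsupp.domCongr H.rightCosetProdEquiv).trans coeffAddEquiv.symm

theorem rightCosetAddEquiv_single (q : Quotient (rightRel H)) (h : H) (c : k) :
    rightCosetAddEquiv H k (Finsupp.single q (single h c)) = single ((h : G) * q.out) c := by
  simp [rightCosetAddEquiv, Subgroup.rightCosetProdEquiv]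

noncomputable def rightCosetBasis :
    Module.Basis (Quotient (rightRel H)) k[H] (Res (mapDomainRingHom k H.subtype) k[G]) := by
  let Φ : (Quotient (rightRel H) →₀ k[H]) →ₗ[k[H]] Res (mapDomainRingHom k H.subtype) k[G] :=
    Finsupp.linearCombination k[H] fun q => (Res.addEquiv _ _).symm (single q.out 1)
  have hΦ : ∀ x, Res.addEquiv _ _ (Φ x) = rightCosetAddEquiv H k x := by
    suffices (Res.addEquiv _ _).toAddMonoidHom.comp Φ.toAddMonoidHom =
        (rightCosetAddEquiv H k).toAddMonoidHom from DFunLike.congr_fun this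
    ext q h c : 3
    simp [Φ, Res.addEquiv_smul, rightCosetAddEquiv_single]
  have hΦ_bij : Function.Bijective Φ := by
    rw [← (Res.addEquiv _ _).bijective.of_comp_iff', show _ ∘ Φ = _ from funext hΦ]
    exact (rightCosetAddEquiv H k).bijective
  exact .ofRepr (LinearEquiv.ofBijective Φ hΦ_bij).symm

instance : Module.Free k[H] (Res (mapDomainRingHom k H.subtype) k[G]) :=
  .of_basis (rightCosetBasis H k)

end MonoidAlgebra

end RightCosets

namespace GPaper

variable (R : Type*) [CommRing R] {G : Type*} [Group G] (X : Type*) [MulAction G X]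

theorem asAlgebraHom_permRep_mapDomain (H : Subgroup G) (r : R[H]) (v : X →₀ R) :
    (permRep R G X).asAlgebraHom (mapDomainRingHom R H.subtype r) v =
      (permRep R H X).asAlgebraHom r v := by
  induction r using MonoidAlgebra.induction_linear with
  | zero => simp
  | add a b ha hb => simp only [map_add, LinearMap.add_apply, ha, hb]
  | single h c => simp [Representation.asAlgebraHom_single]; rfl

noncomputable def omegaModResEquiv (H : Subgroup G) :
    Res (mapDomainRingHom R H.subtype) (omegaMod R G X) ≃ₗ[R[H]] omegaMod R H X where
  toFun v := ⟨(v : omegaMod R G X).1, (v : omegaMod R G X).2⟩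
  invFun v := (⟨v.1, v.2⟩ : omegaMod R G X)
  map_add' _ _ := rfl
  map_smul' r _ := Subtype.ext (asAlgebraHom_permRep_mapDomain R X H r _)
  left_inv _ := rfl
  right_inv _ := rfl

theorem exists_leftInverse_trivMod_omegaMod {a b : X} (hab : a ≠ b) (ha : ∀ g : G, g • a = a)
    (hb : ∀ g : G, g • b = b) :
    ∃ (φ : omegaMod R G X →ₗ[R[G]] trivMod R G) (σ : trivMod R G →ₗ[R[G]] omegaMod R G X),
      Function.LeftInverse φ σ := by
  have hperm (g : G) (x : X) (c : R) :
      permRep R G X g (Finsupp.single x c) = Finsupp.single (g • x) c :=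
    Finsupp.mapDomain_single
  let ev : permMod R G X →ₗ[R[G]] trivMod R G :=
    eqvLinear R G _ _ (Finsupp.lapply a) fun g v => by
      show Finsupp.mapDomain (g • ·) v a = v a
      simpa [ha g] using Finsupp.mapDomain_apply (MulAction.injective g) v a
  let diff : trivMod R G →ₗ[R[G]] permMod R G X :=
    eqvLinear R G _ _ (Finsupp.lsingle a - Finsupp.lsingle b) fun g c => by
      simp [hperm, ha g, hb g]
  have hdiff (c : R) : diff c ∈ omegaMod R G X := by
    show Finsupp.linearCombination R (fun _ => (1 : R))
      (Finsupp.single a c - Finsupp.single b c) = 0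
    simp
  refine ⟨ev ∘ₗ (omegaMod R G X).subtype, diff.codRestrict _ hdiff, fun (c : R) => ?_⟩
  show (Finsupp.single a c - Finsupp.single b c : X →₀ R) a = c
  simp [hab]

end GPaper

theorem stmt16_general (K : Type u) [Field K] (G : Type u) [Group G]
    (X : Type u) [MulAction G X]
    -- `cd_K(G, X) ≤ 2`:
    (hcd : ProjDimLE (MonoidAlgebra K G) 1 ↥(GPaper.omegaMod K G X))
    (t₁ t₂ : X)
    (g : G)
    -- either `t₁, t₂` represent distinct orbits, or `g ∉ G_{t₂}`:
    (hcase : (¬ ∃ h : G, h • t₁ = t₂) ∨ (t₁ = t₂ ∧ g ∉ MulAction.stabilizer G t₂))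
    -- `H = G_{t₁} ∩ g⁻¹ G_{t₂} g`:
    (H : Subgroup G)
    (hH : H = MulAction.stabilizer G t₁ ⊓
      (MulAction.stabilizer G t₂).map (MulAut.conj g⁻¹).toMonoidHom) :
    ProjDimLE (MonoidAlgebra K ↥H) 1 (GPaper.trivMod K ↥H) := by
  rw [← MulAction.stabilizer_smul_eq_stabilizer_map_conj] at hH
  have hfix : ∀ x ∈ H, x • t₁ = t₁ ∧ x • g⁻¹ • t₂ = g⁻¹ • t₂ := by
    rw [hH]
    exact fun x hx => hx
  have hne : t₁ ≠ g⁻¹ • t₂ := by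
    rintro rfl
    rcases hcase with hdistinct | ⟨heq, hg⟩
    · exact hdistinct ⟨g, smul_inv_smul g t₂⟩
    · exact hg (inv_smul_eq_iff.1 heq).symm
  obtain ⟨φ, σ, hφσ⟩ := GPaper.exists_leftInverse_trivMod_omegaMod (G := H) K X hne
    (fun h => (hfix h h.2).1) (fun h => (hfix h h.2).2)
  rw [projDimLE_one_iff] at hcd ⊢
  exact ((hcd.restrict _).of_linearEquiv (GPaper.omegaModResEquiv K X H)).of_leftInverse φ σ hφσ

theorem stmt16 (K : Type u) [Field K] (G : Type u) [Group G]
    (X : Type u) [MulAction G X] [Nonempty X]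
    (x₀ : X) (hreg : MulAction.stabilizer G x₀ = ⊥)
    -- `cd_K(G, X) ≤ 2`:
    (hcd : ProjDimLE (MonoidAlgebra K G) 1 ↥(GPaper.omegaMod K G X))
    -- `t₁, t₂` lie in non-regular orbits:
    (t₁ t₂ : X) (ht₁ : t₁ ∉ MulAction.orbit G x₀) (ht₂ : t₂ ∉ MulAction.orbit G x₀)
    (g : G)
    -- either `t₁, t₂` represent distinct orbits, or `g ∉ G_{t₂}`:
    (hcase : (¬ ∃ h : G, h • t₁ = t₂) ∨ (t₁ = t₂ ∧ g ∉ MulAction.stabilizer G t₂))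
    -- `H = G_{t₁} ∩ g⁻¹ G_{t₂} g`:
    (H : Subgroup G)
    (hH : H = MulAction.stabilizer G t₁ ⊓
      (MulAction.stabilizer G t₂).map (MulAut.conj g⁻¹).toMonoidHom) :
    ProjDimLE (MonoidAlgebra K ↥H) 1 (GPaper.trivMod K ↥H) :=
  stmt16_general K G X hcd t₁ t₂ g hcase H hH
end
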